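/- arXiv:1311.2839 — 8 statements merged into one kernel-verified Lean document; each statement's English description precedes it below -/
import Mathlib

section
/- Let G be a connected undirected graph with n nodes, spectral gap α (i.e. 1 minus the second largest eigenvalue of the normalized adjacency matrix D^{-1/2} A D^{-1/2}), maximum degree Δ and minimum degree δ, and irregularity β = Δ/δ. Let Reg(G) be the Δ-regular graph obtained from G by adding Δ − deg(u) self-loops at each node u. Then the spectral gap of Reg(G) is at least α/β². -/
open Finset

/-- Average degree of a graph on `Fin n`. -/
noncomputable def avgDeg {n : ℕ} (G : SimpleGraph (Fin n)) [DecidableRel G.Adj] : ℝ :=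
  (∑ u, (G.degree u : ℝ)) / n

/-- Dirichlet form (local variance) of `f` for the random walk on `G`, with
respect to the stationary distribution `π_u = deg(u)/(n·d)`:
`E_{π,G}(f,f) = (1/2) ∑_{u,v} π_u (M_G)_{uv} (f u − f v)²`. -/
noncomputable def dirichletForm {n : ℕ} (G : SimpleGraph (Fin n)) [DecidableRel G.Adj]
    (f : Fin n → ℝ) : ℝ :=
  (1 / 2) * ∑ u, ∑ v, ((G.degree u : ℝ) / (n * avgDeg G)) *
    ((if G.Adj u v then (1 : ℝ) else 0) / (G.degree u)) * (f u - f v) ^ 2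

/-- Global variance of `f` with respect to `π_u = deg(u)/(n·d)`:
`Var_π(f) = (1/2) ∑_{u,v} π_u π_v (f u − f v)²`. -/
noncomputable def varForm {n : ℕ} (G : SimpleGraph (Fin n)) [DecidableRel G.Adj]
    (f : Fin n → ℝ) : ℝ :=
  (1 / 2) * ∑ u, ∑ v, ((G.degree u : ℝ) / (n * avgDeg G)) *
    ((G.degree v : ℝ) / (n * avgDeg G)) * (f u - f v) ^ 2

/-- Dirichlet form for the random walk on `Reg(G)`, the `Δ`-regular graph obtained
from `G` by adding `Δ − deg(u)` self-loops at `u`; self-loops contribute `0` since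
`f u − f u = 0`, and the stationary distribution is uniform. -/
noncomputable def dirichletFormReg {n : ℕ} (G : SimpleGraph (Fin n)) [DecidableRel G.Adj]
    (Δ : ℕ) (f : Fin n → ℝ) : ℝ :=
  (1 / 2) * ∑ u, ∑ v, ((1 : ℝ) / n) *
    ((if G.Adj u v then (1 : ℝ) else 0) / Δ) * (f u - f v) ^ 2

/-- Global variance of `f` with respect to the uniform distribution. -/
noncomputable def varFormUnif {n : ℕ} (f : Fin n → ℝ) : ℝ :=
  (1 / 2) * ∑ u, ∑ v, ((1 : ℝ) / n) * ((1 : ℝ) / n) * (f u - f v) ^ 2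

/-!
Both Dirichlet forms are multiples of the same edge energy `∑_{u ~ v} (f u − f v)²`, normalised
by the total weights `n·d` and `n·Δ` (with `d` the average degree), so `E_Reg = (d/Δ)·E_G`.
On the variance side `π_u = deg u/(n·d) ≥ (δ/d)/n`, hence `Var_π ≥ (δ/d)²·Var_unif`.
Together, `E_Reg ≥ (d/Δ)·α·Var_π ≥ α·δ²/(d·Δ)·Var_unif ≥ (α/β²)·Var_unif` because `d ≤ Δ`.
-/

section

variable {n : ℕ} (G : SimpleGraph (Fin n)) [DecidableRel G.Adj]

/-- Each edge is counted once in each orientation. -/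
noncomputable def edgeEnergy (f : Fin n → ℝ) : ℝ :=
  ∑ u, ∑ v, if G.Adj u v then (f u - f v) ^ 2 else 0

lemma avgDeg_nonneg : 0 ≤ avgDeg G := by
  unfold avgDeg
  positivity

lemma le_avgDeg (hn : 0 < n) {δ : ℕ} (hlb : ∀ u, δ ≤ G.degree u) : (δ : ℝ) ≤ avgDeg G := by
  rw [avgDeg, le_div_iff₀ (by exact_mod_cast hn)]
  simpa [mul_comm] using card_nsmul_le_sum univ (fun u ↦ (G.degree u : ℝ)) δ
    fun u _ ↦ by exact_mod_cast hlb u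

lemma avgDeg_le {Δ : ℕ} (hub : ∀ u, G.degree u ≤ Δ) : avgDeg G ≤ Δ :=
  div_le_of_le_mul₀ n.cast_nonneg Δ.cast_nonneg <| by
    simpa [mul_comm] using sum_le_card_nsmul univ (fun u ↦ (G.degree u : ℝ)) Δ
      fun u _ ↦ by exact_mod_cast hub u

lemma dirichletForm_eq_edgeEnergy (f : Fin n → ℝ) :
    dirichletForm G f = edgeEnergy G f / (2 * (n * avgDeg G)) := by
  have hterm : ∀ u v, (G.degree u : ℝ) / (n * avgDeg G) *
      ((if G.Adj u v then (1 : ℝ) else 0) / G.degree u) * (f u - f v) ^ 2 =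
      (if G.Adj u v then (f u - f v) ^ 2 else 0) / (n * avgDeg G) := by
    intro u v
    split_ifs with h
    · have : (G.degree u : ℝ) ≠ 0 := by
        exact_mod_cast ((G.degree_pos_iff_exists_adj u).2 ⟨v, h⟩).ne'
      field_simp
    · simp
  simp only [dirichletForm, edgeEnergy, hterm, ← sum_div]
  ring

lemma dirichletFormReg_eq_edgeEnergy (Δ : ℕ) (f : Fin n → ℝ) :
    dirichletFormReg G Δ f = edgeEnergy G f / (2 * (n * Δ)) := by
  have hterm : ∀ u v, (1 : ℝ) / n * ((if G.Adj u v then (1 : ℝ) else 0) / Δ) * (f u - f v) ^ 2 =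
      (if G.Adj u v then (f u - f v) ^ 2 else 0) / (n * Δ) := by
    intro u v
    split_ifs <;> ring
  simp only [dirichletFormReg, edgeEnergy, hterm, ← sum_div]
  ring

lemma dirichletFormReg_eq_mul_dirichletForm (hd : avgDeg G ≠ 0) (Δ : ℕ) (f : Fin n → ℝ) :
    dirichletFormReg G Δ f = avgDeg G / Δ * dirichletForm G f := by
  rw [dirichletFormReg_eq_edgeEnergy, dirichletForm_eq_edgeEnergy]
  field_simp

lemma varFormUnif_nonneg (f : Fin n → ℝ) : 0 ≤ varFormUnif f := by
  unfold varFormUnif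
  positivity

lemma dirichletFormReg_nonneg (Δ : ℕ) (f : Fin n → ℝ) : 0 ≤ dirichletFormReg G Δ f := by
  unfold dirichletFormReg
  refine mul_nonneg (by norm_num) (sum_nonneg fun u _ ↦ sum_nonneg fun v _ ↦ ?_)
  split_ifs <;> positivity

lemma sq_div_avgDeg_mul_varFormUnif_le_varForm {δ : ℕ} (hlb : ∀ u, δ ≤ G.degree u)
    (f : Fin n → ℝ) : ((δ : ℝ) / avgDeg G) ^ 2 * varFormUnif f ≤ varForm G f := by
  have hnd : 0 ≤ (n : ℝ) * avgDeg G := mul_nonneg n.cast_nonneg (avgDeg_nonneg G)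
  calc ((δ : ℝ) / avgDeg G) ^ 2 * varFormUnif f
      = (1 / 2) * ∑ u, ∑ v, (δ : ℝ) / (n * avgDeg G) * (δ / (n * avgDeg G)) * (f u - f v) ^ 2 := by
        simp only [varFormUnif, mul_sum]
        ring_nf
    _ ≤ varForm G f := by
        unfold varForm
        gcongr with u _ v _
        exacts [hlb u, hlb v]

theorem mul_varFormUnif_le_dirichletFormReg (hd : avgDeg G ≠ 0) {δ : ℕ}
    (hlb : ∀ u, δ ≤ G.degree u) (Δ : ℕ) {α : ℝ} (hα : 0 ≤ α) (f : Fin n → ℝ)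
    (hgap : α * varForm G f ≤ dirichletForm G f) :
    α * (avgDeg G / Δ) * ((δ : ℝ) / avgDeg G) ^ 2 * varFormUnif f ≤ dirichletFormReg G Δ f := by
  have hscale : 0 ≤ avgDeg G / Δ := div_nonneg (avgDeg_nonneg G) Δ.cast_nonneg
  calc α * (avgDeg G / Δ) * ((δ : ℝ) / avgDeg G) ^ 2 * varFormUnif f
      = avgDeg G / Δ * (α * (((δ : ℝ) / avgDeg G) ^ 2 * varFormUnif f)) := by ring
    _ ≤ avgDeg G / Δ * (α * varForm G f) := by
        gcongr
        exact sq_div_avgDeg_mul_varFormUnif_le_varForm G hlb f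
    _ ≤ avgDeg G / Δ * dirichletForm G f := by gcongr
    _ = dirichletFormReg G Δ f := (dirichletFormReg_eq_mul_dirichletForm G hd Δ f).symm

end

theorem regularization_spectralGap_general {n : ℕ} (G : SimpleGraph (Fin n)) [DecidableRel G.Adj]
    (Δ δ : ℕ) (hδpos : 0 < δ)
    (hub : ∀ u, G.degree u ≤ Δ) (hlb : ∀ u, δ ≤ G.degree u)
    (α β : ℝ) (hβ : β = (Δ : ℝ) / δ)
    (hgap : ∀ f : Fin n → ℝ, (¬ ∃ c : ℝ, ∀ u, f u = c) →
      α * varForm G f ≤ dirichletForm G f) :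
    ∀ f : Fin n → ℝ, (¬ ∃ c : ℝ, ∀ u, f u = c) →
      (α / β ^ 2) * varFormUnif f ≤ dirichletFormReg G Δ f := by
  intro f hf
  rcases le_or_gt α 0 with hα | hα
  · have : α / β ^ 2 * varFormUnif f ≤ 0 :=
      mul_nonpos_of_nonpos_of_nonneg (div_nonpos_of_nonpos_of_nonneg hα (sq_nonneg β))
        (varFormUnif_nonneg f)
    exact this.trans (dirichletFormReg_nonneg G Δ f)
  have hn : 0 < n := Nat.pos_of_ne_zero fun h ↦ hf ⟨0, fun u ↦ (h ▸ u).elim0⟩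
  have hδd : (δ : ℝ) ≤ avgDeg G := le_avgDeg G hn hlb
  have hdΔ : avgDeg G ≤ Δ := avgDeg_le G hub
  have hd : 0 < avgDeg G := (Nat.cast_pos.2 hδpos).trans_le hδd
  refine le_trans ?_ (mul_varFormUnif_le_dirichletFormReg G hd.ne' hlb Δ hα.le f (hgap f hf))
  gcongr ?_ * _
  · exact varFormUnif_nonneg f
  have hαβ : α / β ^ 2 = α * (avgDeg G / Δ) * ((δ : ℝ) / avgDeg G) ^ 2 * (avgDeg G / Δ) := by
    rw [hβ]
    field_simp
  rw [hαβ]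
  exact mul_le_of_le_one_right (by positivity) (div_le_one_of_le₀ hdΔ Δ.cast_nonneg)

/-- If a connected graph `G` with maximum degree `Δ`, minimum degree `δ` and
irregularity `β = Δ/δ` has spectral gap at least `α` (in the variational sense),
then `Reg(G)` has spectral gap at least `α/β²`. -/
theorem regularization_spectralGap {n : ℕ} (G : SimpleGraph (Fin n)) [DecidableRel G.Adj]
    (hconn : G.Connected) (Δ δ : ℕ) (hδpos : 0 < δ)
    (hub : ∀ u, G.degree u ≤ Δ) (hlb : ∀ u, δ ≤ G.degree u)
    (hmax : ∃ u, G.degree u = Δ) (hmin : ∃ u, G.degree u = δ)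
    (α β : ℝ) (hβ : β = (Δ : ℝ) / δ)
    (hgap : ∀ f : Fin n → ℝ, (¬ ∃ c : ℝ, ∀ u, f u = c) →
      α * varForm G f ≤ dirichletForm G f) :
    ∀ f : Fin n → ℝ, (¬ ∃ c : ℝ, ∀ u, f u = c) →
      (α / β ^ 2) * varFormUnif f ≤ dirichletFormReg G Δ f :=
  regularization_spectralGap_general G Δ δ hδpos hub hlb α β hβ hgap
end

section
/- Let M ∈ ℝ^{n×n} be a doubly-stochastic symmetric matrix whose eigenvalues are all at most 1−α for eigenvectors orthogonal to the all-ones vector, where α > 0. Let π be the uniform distribution on [n]. Let E = L_{γ,γ}∘Q(M) − L_γ(M)⊗L_γ(M), where L_γ(M) = (1−γ)I + γM and L_{γ,γ}∘Q(M) = (1−γ)²(I⊗I) + (1−γ)γ(I⊗M) + γ(1−γ)(M⊗I) + γ²Q(M). If M_{uv} ≤ η for all u ≠ v, then ‖(π⊗π)E‖₂ ≤ √2 · γ² · n^{−3/2}. -/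
open Matrix Finset

/-- The Doeblin coupling of a stochastic matrix with itself. -/
noncomputable def doeblin {n : ℕ} (M : Matrix (Fin n) (Fin n) ℝ) :
    Matrix (Fin n × Fin n) (Fin n × Fin n) ℝ :=
  fun p q =>
    if p.1 = p.2 then (if q.1 = q.2 then M p.1 q.1 else 0)
    else M p.1 q.1 * M p.2 q.2

/-- Kronecker (tensor) product of two `n × n` matrices, indexed by pairs. -/
def tensor {n : ℕ} (A B : Matrix (Fin n) (Fin n) ℝ) :
    Matrix (Fin n × Fin n) (Fin n × Fin n) ℝ :=
  fun p q => A p.1 q.1 * B p.2 q.2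

/-- The lazy Markov chain `L_γ(M) = (1−γ)I + γM`. -/
noncomputable def lazyM {n : ℕ} (γ : ℝ) (M : Matrix (Fin n) (Fin n) ℝ) :
    Matrix (Fin n) (Fin n) ℝ :=
  (1 - γ) • (1 : Matrix (Fin n) (Fin n) ℝ) + γ • M

/-- The bi-lazy Doeblin coupling
`L_{γ,γ}∘Q(M) = (1−γ)²(I⊗I) + (1−γ)γ(I⊗M) + γ(1−γ)(M⊗I) + γ²Q(M)`. -/
noncomputable def lazyQ {n : ℕ} (γ : ℝ) (M : Matrix (Fin n) (Fin n) ℝ) :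
    Matrix (Fin n × Fin n) (Fin n × Fin n) ℝ :=
  (1 - γ) ^ 2 • tensor (1 : Matrix (Fin n) (Fin n) ℝ) 1 +
    ((1 - γ) * γ) • tensor 1 M + (γ * (1 - γ)) • tensor M 1 + γ ^ 2 • doeblin M

/-- Euclidean norm of a finitely indexed real vector. -/
noncomputable def eucNorm {α : Type*} [Fintype α] (v : α → ℝ) : ℝ :=
  Real.sqrt (∑ i, (v i) ^ 2)

/-! Off the diagonal the Doeblin coupling agrees with `M ⊗ M`, so
`E = γ² (Q(M) - M ⊗ M)` and only the rows `(u, u)` contribute to `(π⊗π)E`; since the columns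
of `M` sum to one, `(π⊗π)E` is `γ²/n²` times the matrix `I - MᵀM` read as a vector on pairs.
Now `MᵀM` is row stochastic and each row `e_v - p` of `I - MᵀM` has `‖e_v - p‖² ≤ 2`, giving
`‖(π⊗π)E‖² ≤ (γ²/n²)² · 2n = 2γ⁴/n³`. -/

section Doeblin

variable {n : ℕ} (M : Matrix (Fin n) (Fin n) ℝ)

lemma lazyQ_sub_tensor_lazyM (γ : ℝ) :
    lazyQ γ M - tensor (lazyM γ M) (lazyM γ M) = γ ^ 2 • (doeblin M - tensor M M) := by
  ext p q
  simp only [lazyQ, lazyM, tensor, Matrix.sub_apply, Matrix.add_apply, Matrix.smul_apply,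
    smul_eq_mul]
  ring

lemma doeblin_sub_tensor_apply_of_ne {u w : Fin n} (h : u ≠ w) (q : Fin n × Fin n) :
    (doeblin M - tensor M M) (u, w) q = 0 := by
  simp [doeblin, tensor, h]

lemma doeblin_sub_tensor_apply_diag (u v x : Fin n) :
    (doeblin M - tensor M M) (u, u) (v, x) = (if v = x then M u v else 0) - M u v * M u x := by
  simp [doeblin, tensor]

lemma const_vecMul_doeblin_sub_tensor (hcol : ∀ j, ∑ i, M i j = 1) (c : ℝ) :
    (fun _ => c) ᵥ* (doeblin M - tensor M M) = fun q => c * (1 - Mᵀ * M) q.1 q.2 := by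
  ext ⟨v, x⟩
  have hdiag : ∀ u, ∑ w, (doeblin M - tensor M M) (u, w) (v, x)
      = (if v = x then M u v else 0) - M u v * M u x := fun u => by
    rw [sum_eq_single u (fun w _ hw => doeblin_sub_tensor_apply_of_ne M (Ne.symm hw) _)
      (by simp), doeblin_sub_tensor_apply_diag]
  simp only [vecMul, dotProduct, Fintype.sum_prod_type, ← mul_sum]
  rw [sum_congr rfl fun u _ => hdiag u, sum_sub_distrib]
  simp only [Matrix.sub_apply, one_apply, mul_apply, transpose_apply]
  split_ifs <;> simp [hcol]

end Doeblin

section Stochastic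

variable {ι : Type*} [Fintype ι] [DecidableEq ι] {S : Matrix ι ι ℝ}

/-- Entrywise `(δ - s)² ≤ δ - 2δs + s` since `0 ≤ s ≤ 1`; summing gives `2 - 2 S i i`. -/
lemma sum_sq_one_sub_apply_le_two (hS : S ∈ rowStochastic ℝ ι) (i : ι) :
    ∑ j, ((1 - S) i j) ^ 2 ≤ 2 := by
  have hentry : ∀ j, ((1 - S) i j) ^ 2
      ≤ (1 : Matrix ι ι ℝ) i j - 2 * ((1 : Matrix ι ι ℝ) i j * S i j) + S i j := fun j => by
    have h0 : 0 ≤ S i j := nonneg_of_mem_rowStochastic hS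
    have h1 : S i j ≤ 1 := le_one_of_mem_rowStochastic hS
    rw [Matrix.sub_apply, one_apply]
    split_ifs <;> nlinarith
  calc ∑ j, ((1 - S) i j) ^ 2
      ≤ ∑ j, ((1 : Matrix ι ι ℝ) i j - 2 * ((1 : Matrix ι ι ℝ) i j * S i j) + S i j) :=
        sum_le_sum fun j _ => hentry j
    _ = 2 - 2 * S i i := by
        simp only [sum_add_distrib, sum_sub_distrib, ← mul_sum, one_apply, ite_mul, one_mul,
          zero_mul, sum_ite_eq, mem_univ, if_true, sum_row_of_mem_rowStochastic hS]
        ring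
    _ ≤ 2 := by linarith [nonneg_of_mem_rowStochastic hS (i := i) (j := i)]

lemma eucNorm_mul_one_sub_le (hS : S ∈ rowStochastic ℝ ι) (c : ℝ) :
    eucNorm (fun q : ι × ι => c * (1 - S) q.1 q.2) ≤ √(c ^ 2 * (2 * Fintype.card ι)) := by
  refine Real.sqrt_le_sqrt ?_
  calc ∑ q : ι × ι, (c * (1 - S) q.1 q.2) ^ 2
      = c ^ 2 * ∑ i, ∑ j, ((1 - S) i j) ^ 2 := by
        simp only [mul_pow, ← mul_sum, Fintype.sum_prod_type]
    _ ≤ c ^ 2 * ∑ _i : ι, 2 := by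
        gcongr with i
        exact sum_sq_one_sub_apply_le_two hS i
    _ = c ^ 2 * (2 * Fintype.card ι) := by simp [mul_comm]

end Stochastic

lemma sqrt_sq_div_sq_mul_two_mul (γ : ℝ) {n : ℝ} (hn : 0 ≤ n) :
    √((γ ^ 2 / n ^ 2) ^ 2 * (2 * n)) = √2 * γ ^ 2 / √(n ^ 3) := by
  rcases hn.eq_or_lt with rfl | hn
  · simp
  rw [show (γ ^ 2 / n ^ 2) ^ 2 * (2 * n) = 2 * (γ ^ 2) ^ 2 / n ^ 3 by field_simp,
    Real.sqrt_div' _ (by positivity), Real.sqrt_mul zero_le_two, Real.sqrt_sq (by positivity)]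

theorem pipi_error_bound_general {n : ℕ} (M : Matrix (Fin n) (Fin n) ℝ) (γ : ℝ)
    (hnn : ∀ i j, 0 ≤ M i j)
    (hrow : ∀ i, ∑ j, M i j = 1) (hcol : ∀ j, ∑ i, M i j = 1) :
    eucNorm ((fun _ : Fin n × Fin n => 1 / (n : ℝ) ^ 2) ᵥ*
        (lazyQ γ M - tensor (lazyM γ M) (lazyM γ M)))
      ≤ Real.sqrt 2 * γ ^ 2 / Real.sqrt ((n : ℝ) ^ 3) := by
  have hM : M ∈ rowStochastic ℝ (Fin n) := mem_rowStochastic_iff_sum.2 ⟨hnn, hrow⟩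
  have hMt : Mᵀ ∈ rowStochastic ℝ (Fin n) :=
    transpose_mem_rowStochastic_iff_mem_colStochastic.2 (mem_colStochastic_iff_sum.2 ⟨hnn, hcol⟩)
  have hvec : (fun _ : Fin n × Fin n => 1 / (n : ℝ) ^ 2) ᵥ*
        (lazyQ γ M - tensor (lazyM γ M) (lazyM γ M))
      = fun q => γ ^ 2 / (n : ℝ) ^ 2 * (1 - Mᵀ * M) q.1 q.2 := by
    rw [lazyQ_sub_tensor_lazyM, vecMul_smul, const_vecMul_doeblin_sub_tensor M hcol]
    ext q
    simp only [Pi.smul_apply, smul_eq_mul]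
    ring
  calc _ ≤ √((γ ^ 2 / (n : ℝ) ^ 2) ^ 2 * (2 * n)) := by
        rw [hvec]
        simpa using eucNorm_mul_one_sub_le (mul_mem hMt hM) (γ ^ 2 / (n : ℝ) ^ 2)
    _ = _ := sqrt_sq_div_sq_mul_two_mul γ n.cast_nonneg

/-- For a doubly-stochastic symmetric `M` with spectral gap `α` and off-diagonal
entries at most `η`, the row vector `(π⊗π)·E`, where
`E = L_{γ,γ}∘Q(M) − L_γ(M)⊗L_γ(M)`, has Euclidean norm at most `√2·γ²·n^{−3/2}`. -/
theorem pipi_error_bound {n : ℕ} (M : Matrix (Fin n) (Fin n) ℝ) (α η γ : ℝ)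
    (hsym : M.IsSymm) (hnn : ∀ i j, 0 ≤ M i j)
    (hrow : ∀ i, ∑ j, M i j = 1) (hcol : ∀ j, ∑ i, M i j = 1)
    (hα : 0 < α)
    (heig : ∀ (c : ℝ) (v : Fin n → ℝ), v ≠ 0 → (∑ i, v i) = 0 →
      M *ᵥ v = c • v → c ≤ 1 - α)
    (hη : ∀ u v, u ≠ v → M u v ≤ η) :
    eucNorm ((fun _ : Fin n × Fin n => 1 / (n : ℝ) ^ 2) ᵥ*
        (lazyQ γ M - tensor (lazyM γ M) (lazyM γ M)))
      ≤ Real.sqrt 2 * γ ^ 2 / Real.sqrt ((n : ℝ) ^ 3) :=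
  pipi_error_bound_general M γ hnn hrow hcol
end

section
/- Let G = (G₀,…,G_{d−1}) be a pairwise independent generator with each G_i : {0,1}^ℓ → [m]. Define G'_i(x) = G_i(x) mod m_i for integers 1 ≤ m_i ≤ m. Then G' is ε-pairwise independent with ε = 2/m: for each i and x ∈ [m_i], |Pr_s[G'_i(s)=x] − 1/m_i| ≤ 2/m, and for distinct i,j and x ∈ [m_i], x' ∈ [m_j], |Pr_s[G'_i(s)=x ∧ G'_j(s)=x'] − 1/(m_i·m_j)| ≤ 2/m. -/
/-!
Uniformity of `G i` (resp. of the pair `(G i, G j)`) means the probability of any event about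
`G i s` (resp. `(G i s, G j s)`) is the density of that event in `[m]` (resp. `[m] × [m]`).
The residue class of `x` modulo `c` has `⌊m / c⌋` or `⌊m / c⌋ + 1` elements in `[m]`, so its
density is within `1 / m` of `1 / c`; for pairs the event is a product of two residue classes,
and a product of two such approximations is within `2 / m` of `1 / (c c')`.
-/

open Finset

theorem Fin.card_filter_val_mod_eq {n c x : ℕ} (hc : 0 < c) (hx : x < c) :
    #{y : Fin n | y.val % c = x} = n / c + if x < n % c then 1 else 0 := by
  have hcount := Nat.count_modEq_card (b := n) hc x
  rw [Nat.count_eq_card_filter_range, ← Nat.Iio_eq_range, ← Fin.map_valEmbedding_univ,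
    filter_map, card_map] at hcount
  simpa [Nat.ModEq, Nat.mod_eq_of_lt hx] using hcount

theorem Fin.abs_card_filter_val_mod_div_sub_le {n c x : ℕ} (hn : 0 < n) (hc : 0 < c)
    (hx : x < c) : |(#{y : Fin n | y.val % c = x} : ℝ) / n - 1 / c| ≤ 1 / n := by
  have hdiv : (c : ℝ) * (n / c : ℕ) + (n % c : ℕ) = n := mod_cast Nat.div_add_mod n c
  have hmod : ((n % c : ℕ) : ℝ) < c := mod_cast Nat.mod_lt n hc
  have hcard_mul : |(#{y : Fin n | y.val % c = x} : ℝ) * c - n| ≤ c := by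
    rw [Fin.card_filter_val_mod_eq hc hx, abs_le]
    split_ifs <;> push_cast <;> constructor <;> linarith [(n % c).cast_nonneg (α := ℝ)]
  have hn' : (0 : ℝ) < n := by exact_mod_cast hn
  have hc' : (0 : ℝ) < c := by exact_mod_cast hc
  calc |(#{y : Fin n | y.val % c = x} : ℝ) / n - 1 / c|
      = |(#{y : Fin n | y.val % c = x} : ℝ) * c - n| / (n * c) := by
        rw [div_sub_div _ _ hn'.ne' hc'.ne', mul_one, abs_div,
          abs_of_pos (by positivity : (0 : ℝ) < n * c)]
    _ ≤ c / (n * c) := by gcongr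
    _ = 1 / n := by field_simp

theorem abs_mul_sub_mul_le {a b α β ε : ℝ} (ha : |a| ≤ 1) (hβ : |β| ≤ 1)
    (haα : |a - α| ≤ ε) (hbβ : |b - β| ≤ ε) : |a * b - α * β| ≤ 2 * ε :=
  calc |a * b - α * β| = |a * (b - β) + β * (a - α)| := by ring_nf
    _ ≤ |a| * |b - β| + |β| * |a - α| := by
        rw [← abs_mul, ← abs_mul]; exact abs_add_le _ _
    _ ≤ 1 * ε + 1 * ε := by gcongr
    _ = 2 * ε := by ring

theorem card_filter_comp_div_eq_of_card_fiber_div_eq {Ω β : Type*} [Fintype Ω] [Fintype β]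
    [DecidableEq β] (g : Ω → β) {N M : ℝ} (hg : ∀ y, (#{s | g s = y} : ℝ) / N = 1 / M)
    (P : β → Prop) [DecidablePred P] :
    (#{s | P (g s)} : ℝ) / N = #{y | P y} / M := by
  have hsum : ∑ y ∈ {y | P y}, #{s | g s = y} = #{s | P (g s)} := by
    simpa using sum_card_fiberwise_eq_card_filter univ {y | P y} g
  rw [← hsum, Nat.cast_sum, sum_div, sum_congr rfl fun y _ => hg y, sum_const, nsmul_eq_mul,
    mul_one_div]

theorem pairwise_mod_almost_pairwise_general {ℓ d m : ℕ}
    (G : Fin d → (Fin ℓ → Bool) → Fin m)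
    (mi : Fin d → ℕ) (hmi : ∀ i, 1 ≤ mi i)
    (hUnif : ∀ (i : Fin d) (x : Fin m),
      ((Finset.univ.filter (fun s : Fin ℓ → Bool => G i s = x)).card : ℝ) / 2 ^ ℓ
        = 1 / m)
    (hPair : ∀ (i j : Fin d), i ≠ j → ∀ (x x' : Fin m),
      ((Finset.univ.filter
          (fun s : Fin ℓ → Bool => G i s = x ∧ G j s = x')).card : ℝ) / 2 ^ ℓ
        = 1 / (m * m)) :
    (∀ (i : Fin d) (x : ℕ), x < mi i →
      |((Finset.univ.filter
            (fun s : Fin ℓ → Bool => (G i s).val % mi i = x)).card : ℝ) / 2 ^ ℓ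
          - 1 / (mi i)| ≤ 2 / m) ∧
    (∀ (i j : Fin d), i ≠ j → ∀ (x x' : ℕ), x < mi i → x' < mi j →
      |((Finset.univ.filter (fun s : Fin ℓ → Bool =>
            (G i s).val % mi i = x ∧ (G j s).val % mi j = x')).card : ℝ) / 2 ^ ℓ
          - 1 / (mi i * mi j)| ≤ 2 / m) := by
  constructor
  · intro i x hx
    have hm : 0 < m := (G i default).pos
    rw [card_filter_comp_div_eq_of_card_fiber_div_eq (G i) (hUnif i)
      (fun y => y.val % mi i = x)]
    calc _ ≤ 1 / (m : ℝ) := Fin.abs_card_filter_val_mod_div_sub_le hm (hmi i) hx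
      _ ≤ 2 / m := by gcongr; norm_num
  · intro i j hij x x' hx hx'
    have hm : 0 < m := (G i default).pos
    have hfiber :
        ∀ p : Fin m × Fin m, (#{s | (G i s, G j s) = p} : ℝ) / 2 ^ ℓ = 1 / (m * m) :=
      fun p => by simpa only [Prod.ext_iff] using hPair i j hij p.1 p.2
    have hprob := card_filter_comp_div_eq_of_card_fiber_div_eq _ hfiber
      (fun p => p.1.val % mi i = x ∧ p.2.val % mi j = x')
    have hfreq_le_one : |(#{y : Fin m | y.val % mi i = x} : ℝ) / m| ≤ 1 := by
      rw [abs_of_nonneg (by positivity)]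
      refine div_le_one_of_le₀ ?_ (Nat.cast_nonneg m)
      exact_mod_cast (card_filter_le univ _).trans_eq (card_fin m)
    have hinv_le_one : |1 / (mi j : ℝ)| ≤ 1 := by
      rw [abs_of_nonneg (by positivity)]
      exact div_le_one_of_le₀ (by exact_mod_cast hmi j) (Nat.cast_nonneg _)
    rw [hprob, ← univ_product_univ,
      filter_product (fun y : Fin m => y.val % mi i = x) (fun y : Fin m => y.val % mi j = x'),
      card_product, Nat.cast_mul, mul_div_mul_comm, ← one_div_mul_one_div]
    calc _ ≤ 2 * (1 / (m : ℝ)) := abs_mul_sub_mul_le hfreq_le_one hinv_le_one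
          (Fin.abs_card_filter_val_mod_div_sub_le hm (hmi i) hx)
          (Fin.abs_card_filter_val_mod_div_sub_le hm (hmi j) hx')
      _ = 2 / m := mul_one_div 2 _

/-- Reducing a pairwise independent generator modulo `m_i ≤ m` yields an
`ε`-pairwise independent generator with `ε = 2/m`. Seeds are uniform over
`{0,1}^ℓ`; probabilities are computed by counting seeds. -/
theorem pairwise_mod_almost_pairwise {ℓ d m : ℕ} (hm : 0 < m)
    (G : Fin d → (Fin ℓ → Bool) → Fin m)
    (mi : Fin d → ℕ) (hmi : ∀ i, 1 ≤ mi i) (hmi' : ∀ i, mi i ≤ m)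
    (hUnif : ∀ (i : Fin d) (x : Fin m),
      ((Finset.univ.filter (fun s : Fin ℓ → Bool => G i s = x)).card : ℝ) / 2 ^ ℓ
        = 1 / m)
    (hPair : ∀ (i j : Fin d), i ≠ j → ∀ (x x' : Fin m),
      ((Finset.univ.filter
          (fun s : Fin ℓ → Bool => G i s = x ∧ G j s = x')).card : ℝ) / 2 ^ ℓ
        = 1 / (m * m)) :
    (∀ (i : Fin d) (x : ℕ), x < mi i →
      |((Finset.univ.filter
            (fun s : Fin ℓ → Bool => (G i s).val % mi i = x)).card : ℝ) / 2 ^ ℓ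
          - 1 / (mi i)| ≤ 2 / m) ∧
    (∀ (i j : Fin d), i ≠ j → ∀ (x x' : ℕ), x < mi i → x' < mi j →
      |((Finset.univ.filter (fun s : Fin ℓ → Bool =>
            (G i s).val % mi i = x ∧ (G j s).val % mi j = x')).card : ℝ) / 2 ^ ℓ
          - 1 / (mi i * mi j)| ≤ 2 / m) :=
  pairwise_mod_almost_pairwise_general G mi hmi hUnif hPair
end

section
/- Let G = (G₀,…,G_{d−1}) : {0,1}^ℓ → [m]^d be an ε-PRG for combinatorial rectangles in [m]^d. Fix indices i₀,…,i_{d'−1} ∈ [d] (d' arbitrary, indices distinct) and moduli m₀,…,m_{d'−1} ≤ m, and define G'_j(x) = G_{i_j}(x) mod m_j. Then G' is an (ε + Σ_{j∈[d']} m_j/m)-PRG for combinatorial rectangles in ∏_{j∈[d']} [m_j]. -/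
/-!
Pull the target rectangle `∏ j B_j` back to the rectangle `A ⊆ [m]^d` whose side at `ι j` is
`{v | v % m_j ∈ B_j}` and whose other sides are full. The PRG sees the same event, so its
acceptance probability is within `ε` of `∏_i |A_i| / m`. Among `0, …, m - 1` every residue modulo
`m_j` occurs `⌊m / m_j⌋` or `⌊m / m_j⌋ + 1` times, so `|A_{ι j}| / m` is within `|B_j| / m ≤ m_j / m`
of `|B_j| / m_j`; and a product of factors in `[-1, 1]` is `1`-Lipschitz in each factor, so the
two products differ by at most the sum of these errors.
-/

open Finset

theorem Finset.norm_prod_sub_prod_le_sum_norm_sub {ι R : Type*} [NormedCommRing R] [NormOneClass R]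
    (s : Finset ι) {f g : ι → R} (hf : ∀ i ∈ s, ‖f i‖ ≤ 1) (hg : ∀ i ∈ s, ‖g i‖ ≤ 1) :
    ‖∏ i ∈ s, f i - ∏ i ∈ s, g i‖ ≤ ∑ i ∈ s, ‖f i - g i‖ := by
  classical
  induction s using Finset.induction_on with
  | empty => simp
  | @insert a s ha ih =>
    simp only [mem_insert, forall_eq_or_imp] at hf hg
    have hgs : ‖∏ i ∈ s, g i‖ ≤ 1 :=
      (norm_prod_le s g).trans (prod_le_one (fun _ _ => norm_nonneg _) hg.2)
    rw [prod_insert ha, prod_insert ha, sum_insert ha]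
    calc ‖f a * ∏ i ∈ s, f i - g a * ∏ i ∈ s, g i‖
        = ‖f a * (∏ i ∈ s, f i - ∏ i ∈ s, g i) + (f a - g a) * ∏ i ∈ s, g i‖ := by ring_nf
      _ ≤ ‖f a‖ * ‖∏ i ∈ s, f i - ∏ i ∈ s, g i‖ + ‖f a - g a‖ * ‖∏ i ∈ s, g i‖ :=
        (norm_add_le _ _).trans (add_le_add (norm_mul_le _ _) (norm_mul_le _ _))
      _ ≤ 1 * ∑ i ∈ s, ‖f i - g i‖ + ‖f a - g a‖ * 1 := by
        gcongr
        exacts [hf.1, ih hf.2 hg.2]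
      _ = ‖f a - g a‖ + ∑ i ∈ s, ‖f i - g i‖ := by ring

theorem Function.Injective.forall_mem_extend_univ_iff {α β γ : Type*} [Fintype γ] {ι : α → β}
    (hι : ι.Injective) (B : α → Finset γ) (x : β → γ) :
    (∀ i, x i ∈ Function.extend ι B (fun _ => univ) i) ↔ ∀ j, x (ι j) ∈ B j := by
  refine ⟨fun h j => hι.extend_apply B _ j ▸ h (ι j), fun h i => ?_⟩
  by_cases hi : ∃ j, ι j = i
  · obtain ⟨j, rfl⟩ := hi
    rw [hι.extend_apply]
    exact h j
  · rw [Function.extend_apply' _ _ _ hi]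
    exact mem_univ _

theorem Fin.card_filter_univ_val (m : ℕ) (p : ℕ → Prop) [DecidablePred p] :
    #{v : Fin m | p v} = #{v ∈ range m | p v} := by
  simp only [card_filter]
  exact Fin.sum_univ_eq_sum_range (fun v => if p v then 1 else 0) m

theorem Nat.card_filter_range_mod_eq_mem_Icc (m : ℕ) {k x : ℕ} (hx : x < k) :
    #{v ∈ range m | v % k = x} ∈ Set.Icc (m / k) (m / k + 1) := by
  have h := Nat.count_modEq_card m (Nat.zero_lt_of_lt hx) x
  simp only [Nat.count_eq_card_filter_range, Nat.ModEq, Nat.mod_eq_of_lt hx] at h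
  rw [h]
  split_ifs <;> simp

theorem Nat.card_filter_range_mod_mem_mem_Icc (m k : ℕ) {b : Finset ℕ} (hb : ∀ x ∈ b, x < k) :
    #{v ∈ range m | v % k ∈ b} ∈ Set.Icc (#b * (m / k)) (#b * (m / k + 1)) := by
  have hbounds x (hx : x ∈ b) := Nat.card_filter_range_mod_eq_mem_Icc m (hb x hx)
  rw [← sum_card_fiberwise_eq_card_filter]
  constructor
  · simpa using card_nsmul_le_sum b _ _ fun x hx => (hbounds x hx).1
  · simpa using sum_le_card_nsmul b _ _ fun x hx => (hbounds x hx).2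

theorem abs_div_sub_div_le_of_mem_Icc {m k b c : ℕ} (hm : 0 < m)
    (hc : c ∈ Set.Icc (b * (m / k)) (b * (m / k + 1))) :
    |(c : ℝ) / m - b / k| ≤ b / m := by
  obtain rfl | hk := k.eq_zero_or_pos
  · simp only [Nat.div_zero, zero_add, mul_one, mul_zero, Set.mem_Icc, zero_le, true_and] at hc
    rw [Nat.cast_zero, div_zero, sub_zero, abs_of_nonneg (by positivity)]
    gcongr
  set q := m / k
  have hqk : (q * k : ℝ) ≤ m := by exact_mod_cast Nat.div_mul_le_self m k
  have hmk : (m : ℝ) ≤ q * k + k := by exact_mod_cast (Nat.lt_div_mul_add hk).le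
  have hlow : (b * q : ℝ) ≤ c := by exact_mod_cast hc.1
  have hup : (c : ℝ) ≤ b * (q + 1) := by exact_mod_cast hc.2
  have hm' : (0 : ℝ) < m := by exact_mod_cast hm
  have hk' : (0 : ℝ) < k := by exact_mod_cast hk
  have key : |(c * k - b * m : ℝ)| ≤ b * k := by
    rw [abs_le]
    constructor <;> nlinarith [mul_le_mul_of_nonneg_right hlow hk'.le,
      mul_le_mul_of_nonneg_right hup hk'.le, mul_le_mul_of_nonneg_left hqk (Nat.cast_nonneg b),
      mul_le_mul_of_nonneg_left hmk (Nat.cast_nonneg b)]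
  calc |(c : ℝ) / m - b / k| = |(c * k - b * m : ℝ)| / (m * k) := by
        rw [div_sub_div _ _ hm'.ne' hk'.ne', abs_div, abs_of_pos (mul_pos hm' hk'),
          mul_comm (m : ℝ) b]
    _ ≤ b * k / (m * k) := by gcongr
    _ = b / m := mul_div_mul_right _ _ hk'.ne'

theorem abs_card_filter_mod_mem_div_sub_le {m : ℕ} (hm : 0 < m) (k : ℕ) {b : Finset ℕ}
    (hb : ∀ x ∈ b, x < k) :
    |(#{v : Fin m | v.val % k ∈ b} : ℝ) / m - #b / k| ≤ #b / m := by
  rw [Fin.card_filter_univ_val m (· % k ∈ b)]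
  exact abs_div_sub_div_le_of_mem_Icc hm (Nat.card_filter_range_mod_mem_mem_Icc m k hb)

theorem rectanglePRG_mod_general {ℓ d d' m : ℕ} (hm : 0 < m)
    (G : Fin d → (Fin ℓ → Bool) → Fin m) (ε : ℝ)
    (hPRG : ∀ A : Fin d → Finset (Fin m),
      |((Finset.univ.filter
            (fun s : Fin ℓ → Bool => ∀ i, G i s ∈ A i)).card : ℝ) / 2 ^ ℓ
          - ∏ i, ((A i).card : ℝ) / m| ≤ ε)
    (ι : Fin d' → Fin d) (hι : Function.Injective ι)
    (mi : Fin d' → ℕ)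
    (B : Fin d' → Finset ℕ) (hB : ∀ j, ∀ x ∈ B j, x < mi j) :
    |((Finset.univ.filter (fun s : Fin ℓ → Bool =>
          ∀ j, (G (ι j) s).val % mi j ∈ B j)).card : ℝ) / 2 ^ ℓ
        - ∏ j, ((B j).card : ℝ) / (mi j)| ≤ ε + ∑ j, (mi j : ℝ) / m := by
  set B' : Fin d' → Finset (Fin m) := fun j => {v | v.val % mi j ∈ B j}
  set A : Fin d → Finset (Fin m) := Function.extend ι B' fun _ => univ
  have hprod : ∏ i, (#(A i) : ℝ) / m = ∏ j, (#(B' j) : ℝ) / m := by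
    refine (Fintype.prod_of_injective ι hι _ _ (fun i hi => ?_) fun j => ?_).symm
    · rw [show A i = univ from Function.extend_apply' _ _ _ hi, card_univ, Fintype.card_fin]
      exact div_self (Nat.cast_ne_zero.mpr hm.ne')
    · rw [show A (ι j) = B' j from hι.extend_apply _ _ _]
  have hBle j : #(B j) ≤ mi j := by
    simpa using card_le_card fun x (hx : x ∈ B j) => mem_range.mpr (hB j x hx)
  have hprodcmp : |∏ j, (#(B' j) : ℝ) / m - ∏ j, (#(B j) : ℝ) / mi j| ≤ ∑ j, (mi j : ℝ) / m := by
    have hf j : ‖(#(B' j) : ℝ) / m‖ ≤ 1 := by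
      rw [Real.norm_of_nonneg (by positivity)]
      exact div_le_one_of_le₀ (by simpa using card_le_univ (B' j)) (Nat.cast_nonneg m)
    have hg j : ‖(#(B j) : ℝ) / mi j‖ ≤ 1 := by
      rw [Real.norm_of_nonneg (by positivity)]
      exact div_le_one_of_le₀ (by exact_mod_cast hBle j) (Nat.cast_nonneg _)
    have h := norm_prod_sub_prod_le_sum_norm_sub univ (fun j _ => hf j) fun j _ => hg j
    simp only [Real.norm_eq_abs] at h
    refine h.trans (sum_le_sum fun j _ => ?_)
    refine (abs_card_filter_mod_mem_div_sub_le hm (mi j) (hB j)).trans ?_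
    gcongr
    exact hBle j
  have hP := hPRG A
  rw [hprod] at hP
  simp only [A, hι.forall_mem_extend_univ_iff, B', mem_filter, mem_univ, true_and] at hP
  exact (abs_sub_le _ _ _).trans (add_le_add hP hprodcmp)

/-- Reducing an `ε`-PRG for combinatorial rectangles in `[m]^d` modulo
`m_j ≤ m` along distinct coordinates `i_0,…,i_{d'−1}` yields an
`(ε + Σ_j m_j/m)`-PRG for combinatorial rectangles in `∏_j [m_j]`. -/
theorem rectanglePRG_mod {ℓ d d' m : ℕ} (hm : 0 < m)
    (G : Fin d → (Fin ℓ → Bool) → Fin m) (ε : ℝ)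
    (hPRG : ∀ A : Fin d → Finset (Fin m),
      |((Finset.univ.filter
            (fun s : Fin ℓ → Bool => ∀ i, G i s ∈ A i)).card : ℝ) / 2 ^ ℓ
          - ∏ i, ((A i).card : ℝ) / m| ≤ ε)
    (ι : Fin d' → Fin d) (hι : Function.Injective ι)
    (mi : Fin d' → ℕ) (hmi : ∀ j, 1 ≤ mi j) (hmi' : ∀ j, mi j ≤ m)
    (B : Fin d' → Finset ℕ) (hB : ∀ j, ∀ x ∈ B j, x < mi j) :
    |((Finset.univ.filter (fun s : Fin ℓ → Bool =>
          ∀ j, (G (ι j) s).val % mi j ∈ B j)).card : ℝ) / 2 ^ ℓ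
        - ∏ j, ((B j).card : ℝ) / (mi j)| ≤ ε + ∑ j, (mi j : ℝ) / m :=
  rectanglePRG_mod_general hm G ε hPRG ι hι mi B hB
end

section
/- Let Γ : [N] × [D] → ⨆_{y∈[D]}[M_y] be a (K, (1−ε)D)-expander, i.e., for every set S ⊆ [N] of size K, the neighborhood N(S) = {(Γ(x,y), y) : x ∈ S, y ∈ [D]} has size at least (1−ε)DK. Then for every S ⊆ [N] with |S| = K, for at least a (1 − √ε)-fraction of y ∈ [D], the set {Γ(x,y) : x ∈ S} has size at least (1 − √ε)K. -/
open Finset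
open scoped Classical

/-!
The neighbourhood of `S` is the disjoint union over the seeds `y` of the images `Γ(S, y)`, so the
expansion hypothesis says that the deficits `K - |Γ(S, y)|`, which are nonnegative, sum to at most
`ε D K`. By Markov's inequality at most `√ε D` seeds have a deficit exceeding `√ε K`.
-/

theorem Finset.image_prod_sigma {α β : Type*} {γ : β → Type*} [DecidableEq (Σ b, γ b)]
    [∀ b, DecidableEq (γ b)] (f : α → (b : β) → γ b) (S : Finset α) (T : Finset β) :
    (S ×ˢ T).image (fun p => (⟨p.2, f p.1 p.2⟩ : Σ b, γ b)) =
      T.sigma fun b => S.image (f · b) := by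
  ext ⟨b, c⟩
  simp only [mem_image, mem_product, mem_sigma, Sigma.mk.inj_iff, Prod.exists]
  constructor
  · rintro ⟨a, b, ⟨ha, hb⟩, rfl, hc⟩
    exact ⟨hb, a, ha, eq_of_heq hc⟩
  · rintro ⟨hb, a, ha, rfl⟩
    exact ⟨a, b, ⟨ha, hb⟩, rfl, HEq.rfl⟩

theorem Finset.card_filter_nsmul_lt_sum {ι M : Type*} [AddCommMonoid M] [PartialOrder M]
    [IsOrderedCancelAddMonoid M] {s : Finset ι} {f : ι → M} {a : M} (hf : ∀ i ∈ s, 0 ≤ f i)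
    (hne : (s.filter (a < f ·)).Nonempty) :
    #(s.filter (a < f ·)) • a < ∑ i ∈ s, f i :=
  calc #(s.filter (a < f ·)) • a
      = ∑ _i ∈ s.filter (a < f ·), a := (sum_const a).symm
    _ < ∑ i ∈ s.filter (a < f ·), f i :=
        sum_lt_sum_of_nonempty hne fun _ hi => (mem_filter.1 hi).2
    _ ≤ ∑ i ∈ s, f i :=
        sum_le_sum_of_subset_of_nonneg (filter_subset _ _) fun i hi _ => hf i hi

theorem mul_card_le_card_filter_of_sum_le {ι : Type*} [Fintype ι] {c : ι → ℝ} {K s : ℝ}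
    (hK : 0 ≤ K) (hs : 0 ≤ s) (hc : ∀ i, c i ≤ K)
    (hsum : (1 - s ^ 2) * Fintype.card ι * K ≤ ∑ i, c i) :
    (1 - s) * Fintype.card ι ≤ #{i | (1 - s) * K ≤ c i} := by
  set bad := (univ : Finset ι).filter (s * K < K - c ·)
  have hbad_eq : (univ : Finset ι).filter (fun i => ¬ (1 - s) * K ≤ c i) = bad :=
    filter_congr fun i _ => by rw [not_le]; constructor <;> intro h <;> linarith
  have hbad : (#bad : ℝ) ≤ s * Fintype.card ι := by
    rcases bad.eq_empty_or_nonempty with hempty | hne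
    · rw [hempty, card_empty, Nat.cast_zero]
      positivity
    · have hdeficit : ∑ i, (K - c i) ≤ s ^ 2 * Fintype.card ι * K := by
        rw [sum_sub_distrib, sum_const, card_univ, nsmul_eq_mul]
        linarith
      have hlt := card_filter_nsmul_lt_sum (fun i _ => sub_nonneg.2 (hc i)) hne
      rw [nsmul_eq_mul] at hlt
      refine (lt_of_mul_lt_mul_right ?_ (mul_nonneg hs hK)).le
      linarith
  have hsplit := card_filter_add_card_filter_not (s := (univ : Finset ι))
    (fun i => (1 - s) * K ≤ c i)
  rw [hbad_eq, card_univ] at hsplit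
  have : (#{i | (1 - s) * K ≤ c i} : ℝ) + #bad = Fintype.card ι := by exact_mod_cast hsplit
  linarith

theorem expander_almost_injective_general {N D K : ℕ} (M : Fin D → ℕ)
    (Γ : Fin N → (y : Fin D) → Fin (M y)) (ε : ℝ) (hε0 : 0 ≤ ε)
    (hexp : ∀ S : Finset (Fin N), S.card = K →
      ((1 - ε) * D * K : ℝ) ≤
        (((S ×ˢ (Finset.univ : Finset (Fin D))).image
            (fun p => (⟨p.2, Γ p.1 p.2⟩ : Σ y : Fin D, Fin (M y)))).card : ℝ)) :
    ∀ S : Finset (Fin N), S.card = K →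
      ((1 - Real.sqrt ε) * D : ℝ) ≤
        (((Finset.univ : Finset (Fin D)).filter (fun y =>
            ((1 - Real.sqrt ε) * K : ℝ) ≤ ((S.image (fun x => Γ x y)).card : ℝ))).card : ℝ) := by
  intro S hS
  have hsum := hexp S hS
  rw [image_prod_sigma, card_sigma, Nat.cast_sum] at hsum
  have hcard := mul_card_le_card_filter_of_sum_le (c := fun y => (#(S.image (Γ · y)) : ℝ))
    K.cast_nonneg (Real.sqrt_nonneg ε)
    (fun y => by exact_mod_cast hS ▸ card_image_le)
    (by rwa [Real.sq_sqrt hε0, Fintype.card_fin])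
  rwa [Fintype.card_fin] at hcard

/-- For a `(K, (1−ε)D)`-expander `Γ : [N]×[D] → ⨆_y [M_y]` and a left set `S`
of size `K`, for at least a `(1−√ε)`-fraction of the seeds `y ∈ [D]`, the map
`Γ(·,y)` is almost injective on `S`: `|{Γ(x,y) : x ∈ S}| ≥ (1−√ε)K`. -/
theorem expander_almost_injective {N D K : ℕ} (M : Fin D → ℕ)
    (Γ : Fin N → (y : Fin D) → Fin (M y)) (ε : ℝ) (hε0 : 0 ≤ ε) (hε1 : ε ≤ 1)
    (hexp : ∀ S : Finset (Fin N), S.card = K →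
      ((1 - ε) * D * K : ℝ) ≤
        (((S ×ˢ (Finset.univ : Finset (Fin D))).image
            (fun p => (⟨p.2, Γ p.1 p.2⟩ : Σ y : Fin D, Fin (M y)))).card : ℝ)) :
    ∀ S : Finset (Fin N), S.card = K →
      ((1 - Real.sqrt ε) * D : ℝ) ≤
        (((Finset.univ : Finset (Fin D)).filter (fun y =>
            ((1 - Real.sqrt ε) * K : ℝ) ≤ ((S.image (fun x => Γ x y)).card : ℝ))).card : ℝ) :=
  expander_almost_injective_general M Γ ε hε0 hexp
end

section
/- Fix 0 < p < 1 and let X₁,…,X_n be independent geometric random variables on ℕ with Pr[X_i = k] = (1−p)^{k−1}·p for each k ≥ 1. Let X = Σ X_i and μ = E[X] = n/p. Then for all β > 0, Pr[X ≥ (1+β)μ] ≤ exp(−nβ²/(2(1+β))). -/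
/-!
Chernoff's method. With `r = (1 + β) / (1 + β - pβ)` one has `(1 - p) r < 1` and
`p r / (1 - (1 - p) r) = 1 + β`, so at `t = log r` the moment generating function of each
`X i` (a shifted geometric law) equals `1 + β`, and
`Pr[X ≥ a] ≤ exp (-t a) (1 + β) ^ n` with `a = (1 + β) n / p`.
Then `t ≥ 1 - r⁻¹ = pβ / (1 + β)` gives `t a ≥ nβ`, and
`log (1 + β) ≤ sinh (log (1 + β)) = β - β² / (2 (1 + β))` finishes.
-/

open MeasureTheory ProbabilityTheory Finset Real

theorem Real.log_one_add_le_sub_sq_div {x : ℝ} (hx : 0 ≤ x) :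
    log (1 + x) ≤ x - x ^ 2 / (2 * (1 + x)) := by
  have h1x : 0 < 1 + x := by linarith
  have h := self_le_sinh_iff.2 (log_nonneg (by linarith : (1 : ℝ) ≤ 1 + x))
  rw [sinh_log h1x] at h
  calc log (1 + x) ≤ (1 + x - (1 + x)⁻¹) / 2 := h
    _ = x - x ^ 2 / (2 * (1 + x)) := by field_simp; ring

theorem exp_neg_mul_mul_one_add_pow_le {n : ℕ} {p β t : ℝ} (hp : 0 < p) (hβ : 0 ≤ β)
    (ht : p * β / (1 + β) ≤ t) :
    exp (-t * ((1 + β) * (n / p))) * (1 + β) ^ n ≤ exp (-n * β ^ 2 / (2 * (1 + β))) := by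
  have hta : n * β ≤ t * ((1 + β) * (n / p)) :=
    calc n * β = p * β / (1 + β) * ((1 + β) * (n / p)) := by field_simp
      _ ≤ _ := by gcongr
  have hlog := mul_le_mul_of_nonneg_left (log_one_add_le_sub_sq_div hβ) n.cast_nonneg
  rw [← exp_log (by positivity : 0 < (1 + β) ^ n), log_pow, ← exp_add, exp_le_exp]
  calc -t * ((1 + β) * (n / p)) + n * log (1 + β)
      ≤ -(n * β) + n * (β - β ^ 2 / (2 * (1 + β))) := by linarith
    _ = -n * β ^ 2 / (2 * (1 + β)) := by ring

theorem MeasureTheory.Measure.ext_of_singleton_of_ne {α : Type*} [MeasurableSpace α]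
    [Countable α] [MeasurableSingletonClass α] {ν₁ ν₂ : Measure α} [IsProbabilityMeasure ν₁]
    [IsProbabilityMeasure ν₂] (a : α) (h : ∀ b ≠ a, ν₁ {b} = ν₂ {b}) : ν₁ = ν₂ := by
  have hrestrict : ν₁.restrict {a}ᶜ = ν₂.restrict {a}ᶜ := by
    refine Measure.ext_of_singleton fun b => ?_
    rw [Measure.restrict_apply (measurableSet_singleton b),
      Measure.restrict_apply (measurableSet_singleton b)]
    by_cases hb : b = a
    · simp [hb]
    · rw [Set.inter_eq_left.2 (Set.singleton_subset_iff.2 hb), h b hb]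
  have hcompl : ν₁ {a}ᶜ = ν₂ {a}ᶜ := by
    simpa using DFunLike.congr_fun hrestrict Set.univ
  refine Measure.ext_of_singleton fun b => ?_
  by_cases hb : b = a
  · rw [hb, ← compl_compl ({a} : Set α), prob_compl_eq_one_sub (measurableSet_singleton a).compl,
      prob_compl_eq_one_sub (measurableSet_singleton a).compl, hcompl]
  · exact h b hb

namespace ProbabilityTheory

variable {q : unitInterval} {t : ℝ}

lemma geometric_weight_mul_exp (n : ℕ) :
    (1 - q : ℝ) ^ n * q * exp (t * n) = q * ((1 - q) * exp t) ^ n := by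
  rw [mul_comm t, exp_nat_mul, mul_pow]; ring

lemma integrable_exp_mul_geometricMeasure (hq : q ≠ 0) (ht : (1 - q) * exp t < 1) :
    Integrable (fun n : ℕ => exp (t * n)) (geometricMeasure q) := by
  rw [integrable_geometricMeasure_iff hq]
  simp only [norm_eq_abs, abs_exp, geometric_weight_mul_exp]
  exact (summable_geometric_of_lt_one (by have := q.2.2; positivity) ht).mul_left _

lemma mgf_natCast_geometricMeasure (hq : q ≠ 0) (ht : (1 - q) * exp t < 1) :
    mgf (fun n : ℕ => (n : ℝ)) (geometricMeasure q) t = q / (1 - (1 - q) * exp t) := by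
  rw [mgf, integral_geometricMeasure hq]
  simp only [smul_eq_mul, geometric_weight_mul_exp]
  rw [tsum_mul_left, tsum_geometric_of_lt_one (by have := q.2.2; positivity) ht, div_eq_mul_inv]

lemma identDistrib_succ_geometricMeasure {Ω : Type*} [MeasurableSpace Ω] {μ : Measure Ω}
    [IsProbabilityMeasure μ] (hq : q ≠ 0) {Y : Ω → ℕ} (hY : Measurable Y)
    (hgeom : ∀ k, 1 ≤ k → μ {ω | Y ω = k} = ENNReal.ofReal ((1 - q) ^ (k - 1) * q)) :
    IdentDistrib Y Nat.succ μ (geometricMeasure q) := by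
  have := Measure.isProbabilityMeasure_map (μ := μ) hY.aemeasurable
  have := Measure.isProbabilityMeasure_map (μ := geometricMeasure q)
    (measurable_from_nat (f := Nat.succ)).aemeasurable
  refine ⟨hY.aemeasurable, measurable_from_nat.aemeasurable,
    Measure.ext_of_singleton_of_ne 0 fun b hb => ?_⟩
  obtain ⟨k, rfl⟩ := Nat.exists_eq_succ_of_ne_zero hb
  rw [Measure.map_apply hY (measurableSet_singleton _),
    Measure.map_apply measurable_from_nat (measurableSet_singleton _),
    show Nat.succ ⁻¹' {k.succ} = {k} by ext; simp, geometricMeasure_singleton hq]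
  exact hgeom (k + 1) le_add_self

namespace IdentDistrib

variable {Ω : Type*} [MeasurableSpace Ω] {μ : Measure Ω} {Y : Ω → ℕ}

lemma integrable_exp_mul_succ_geometricMeasure
    (h : IdentDistrib Y Nat.succ μ (geometricMeasure q)) (hq : q ≠ 0) (ht : (1 - q) * exp t < 1) :
    Integrable (fun ω => exp (t * Y ω)) μ := by
  refine (h.comp (measurable_from_nat (f := fun k : ℕ => exp (t * k)))).integrable_iff.2 ?_
  refine ((integrable_exp_mul_geometricMeasure hq ht).const_mul (exp t)).congr
    (Filter.Eventually.of_forall fun n => ?_)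
  simp [← exp_add, mul_add, add_comm]

lemma mgf_succ_geometricMeasure (h : IdentDistrib Y Nat.succ μ (geometricMeasure q))
    (hq : q ≠ 0) (ht : (1 - q) * exp t < 1) :
    mgf (fun ω => (Y ω : ℝ)) μ t = q * exp t / (1 - (1 - q) * exp t) := by
  have hlaw := h.comp (measurable_from_nat (f := fun k : ℕ => (k : ℝ)))
  simp only [Function.comp_def, Nat.succ_eq_add_one, Nat.cast_add_one] at hlaw
  rw [mgf_congr_identDistrib hlaw, mgf_add_const, mgf_natCast_geometricMeasure hq ht, mul_one]
  ring

end IdentDistrib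

theorem iIndepFun.measureReal_sum_ge_le {Ω ι : Type*} [MeasurableSpace Ω] {μ : Measure Ω}
    [Fintype ι] {Y : ι → Ω → ℝ} (hindep : iIndepFun Y μ) (hY : ∀ i, Measurable (Y i))
    {t m : ℝ} (ht : 0 ≤ t) (hint : ∀ i, Integrable (fun ω => exp (t * Y i ω)) μ)
    (hmgf : ∀ i, mgf (Y i) μ t = m) (a : ℝ) :
    μ.real {ω | a ≤ ∑ i, Y i ω} ≤ exp (-t * a) * m ^ Fintype.card ι := by
  have := hindep.isProbabilityMeasure
  have hchernoff := measure_ge_le_exp_mul_mgf a ht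
    (hindep.integrable_exp_mul_sum hY (s := univ) fun i _ => hint i)
  simpa [Finset.sum_apply, hindep.mgf_sum hY, hmgf] using hchernoff

end ProbabilityTheory

/-- Chernoff bound for sums of i.i.d.-type geometric random variables on
`{1,2,…}` with success probability `p`: for `X = Σ X_i` with mean `μ = n/p`,
`Pr[X ≥ (1+β)μ] ≤ exp(−nβ²/(2(1+β)))`. -/
theorem geometric_sum_tail {Ω : Type*} [MeasurableSpace Ω] (μ : Measure Ω)
    [IsProbabilityMeasure μ] {n : ℕ} (p : ℝ) (hp0 : 0 < p) (hp1 : p < 1)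
    (X : Fin n → Ω → ℕ) (hmeas : ∀ i, Measurable (X i))
    (hindep : iIndepFun X μ)
    (hgeom : ∀ (i : Fin n) (k : ℕ), 1 ≤ k →
      μ {ω | X i ω = k} = ENNReal.ofReal ((1 - p) ^ (k - 1) * p))
    (β : ℝ) (hβ : 0 < β) :
    (μ {ω | (1 + β) * ((n : ℝ) / p) ≤ ∑ i, (X i ω : ℝ)}).toReal
      ≤ Real.exp (-(n : ℝ) * β ^ 2 / (2 * (1 + β))) := by
  set q : unitInterval := ⟨p, hp0.le, hp1.le⟩
  have hq_coe : (q : ℝ) = p := rfl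
  have hq : q ≠ 0 := fun h => hp0.ne' (congrArg Subtype.val h)
  have hden : 0 < 1 + β - p * β := by nlinarith
  set r := (1 + β) / (1 + β - p * β) with hr
  have hr1 : 1 ≤ r := (one_le_div hden).2 (by nlinarith)
  have hexp : exp (log r) = r := exp_log (by linarith)
  have htilt : (1 - q) * exp (log r) < 1 := by
    rw [hexp, hr, ← mul_div_assoc, div_lt_one hden]
    nlinarith
  have hlaw i := identDistrib_succ_geometricMeasure hq (hmeas i) (hgeom i)
  have hmgf i : mgf (fun ω => (X i ω : ℝ)) μ (log r) = 1 + β := by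
    rw [(hlaw i).mgf_succ_geometricMeasure hq htilt, div_eq_iff (by linarith), hexp, hq_coe, hr]
    field_simp
    ring
  have hchernoff := (hindep.comp (fun _ => (Nat.cast : ℕ → ℝ)) fun _ => measurable_from_nat)
    |>.measureReal_sum_ge_le (fun i => measurable_from_nat.comp (hmeas i)) (log_nonneg hr1)
      (fun i => (hlaw i).integrable_exp_mul_succ_geometricMeasure hq htilt) hmgf
      ((1 + β) * (n / p))
  rw [Fintype.card_fin] at hchernoff
  refine hchernoff.trans (exp_neg_mul_mul_one_add_pow_le hp0 hβ.le ?_)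
  calc p * β / (1 + β) = 1 - r⁻¹ := by rw [hr]; field_simp; ring
    _ ≤ log r := one_sub_inv_le_log_of_pos (by linarith)
end

section
/- Let G be an undirected graph on n vertices with normalized adjacency matrix having second eigenvalue λ = λ₂ in absolute value bounded by λ (i.e., all nontrivial eigenvalues are at most λ in absolute value). Then for any subsets X, Y of vertices: |e(X,Y) − vol(X)·vol(Y)/vol(G)| ≤ λ·√(vol(X)·vol(Y)·vol(X̄)·vol(Ȳ))/vol(G), where e(X,Y) counts edges with one endpoint in X and the other in Y, vol(S) = Σ_{u∈S} deg(u), and X̄, Ȳ are complements. -/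
/-! Write `s = D^{1/2}𝟙` and `x = D^{1/2}𝟙_X`, `y = D^{1/2}𝟙_Y`. Then `⟪x, A y⟫ = e(X,Y)`,
`⟪s, x⟫ = ‖x‖² = vol X`, `‖s‖² = vol G`, and `A s = s` for the normalized adjacency matrix `A`.
Since `A` is symmetric it preserves `s^⊥`, where all its eigenvalues are at most `λ` in absolute
value, so `|⟪w₁, A w₂⟫| ≤ λ‖w₁‖‖w₂‖` for `w₁, w₂ ⊥ s`. Applied to the components of `x` and `y`
orthogonal to `s`, this is the claim: `⟪x, A y⟫ - ⟪s,x⟫⟪s,y⟫/‖s‖² = ⟪w₁, A w₂⟫` and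
`‖w₁‖² = vol X - (vol X)²/vol G = vol X · vol Xᶜ / vol G`. -/

open Finset Matrix

/-- Volume of a vertex set: the sum of degrees. -/
def gvol {n : ℕ} (G : SimpleGraph (Fin n)) [DecidableRel G.Adj]
    (S : Finset (Fin n)) : ℕ :=
  ∑ u ∈ S, G.degree u

/-- Number of (ordered) edges between `X` and `Y`: pairs `(u,v)` with `u ∈ X`,
`v ∈ Y` and `u ∼ v` (edges inside `X ∩ Y` are counted twice). -/
def gedges {n : ℕ} (G : SimpleGraph (Fin n)) [DecidableRel G.Adj]
    (X Y : Finset (Fin n)) : ℕ :=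
  ∑ u ∈ X, ∑ v ∈ Y, if G.Adj u v then 1 else 0

/-- Normalized adjacency matrix `D^{-1/2} A D^{-1/2}`. -/
noncomputable def normAdj {n : ℕ} (G : SimpleGraph (Fin n)) [DecidableRel G.Adj] :
    Matrix (Fin n) (Fin n) ℝ :=
  fun u v => (if G.Adj u v then (1 : ℝ) else 0) /
    (Real.sqrt (G.degree u) * Real.sqrt (G.degree v))

open Module.End
open scoped RealInnerProductSpace

namespace LinearMap.IsSymmetric

variable {E : Type*} [NormedAddCommGroup E] [InnerProductSpace ℝ E] [FiniteDimensional ℝ E]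
  {T : E →ₗ[ℝ] E} {lam : ℝ}

theorem abs_inner_le_of_forall_hasEigenvalue (hT : T.IsSymmetric)
    (hlam : ∀ μ, HasEigenvalue T μ → |μ| ≤ lam) (x y : E) :
    |⟪x, T y⟫| ≤ lam * ‖x‖ * ‖y‖ := by
  rcases subsingleton_or_nontrivial E with hE | hE
  · simp [Subsingleton.elim x 0]
  have hlam0 : 0 ≤ lam := (abs_nonneg _).trans (hlam _ hT.hasEigenvalue_iSup_of_finiteDimensional)
  let b := hT.eigenvectorBasis rfl
  have hcoeff : ∀ i, ⟪b i, T y⟫ = hT.eigenvalues rfl i * ⟪b i, y⟫ := fun i => by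
    rw [← hT, hT.apply_eigenvectorBasis, real_inner_smul_left]; rfl
  calc |⟪x, T y⟫| = |∑ i, hT.eigenvalues rfl i * (⟪x, b i⟫ * ⟪b i, y⟫)| := by
        rw [← b.sum_inner_mul_inner]
        simp only [hcoeff, mul_left_comm]
    _ ≤ ∑ i, lam * (|⟪x, b i⟫| * |⟪b i, y⟫|) := by
        refine (Finset.abs_sum_le_sum_abs _ _).trans (Finset.sum_le_sum fun i _ => ?_)
        rw [abs_mul, abs_mul]
        exact mul_le_mul_of_nonneg_right (hlam _ (hT.hasEigenvalue_eigenvalues rfl i))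
          (by positivity)
    _ ≤ lam * (‖x‖ * ‖y‖) := by
        rw [← Finset.mul_sum]
        refine mul_le_mul_of_nonneg_left ?_ hlam0
        calc ∑ i, |⟪x, b i⟫| * |⟪b i, y⟫|
            ≤ √(∑ i, |⟪x, b i⟫| ^ 2) * √(∑ i, |⟪b i, y⟫| ^ 2) :=
              Real.sum_mul_le_sqrt_mul_sqrt _ _ _
          _ = ‖x‖ * ‖y‖ := by
              simp only [sq_abs, b.sum_sq_inner_left, b.sum_sq_inner_right,
                Real.sqrt_sq (norm_nonneg _)]
    _ = lam * ‖x‖ * ‖y‖ := (mul_assoc _ _ _).symm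

theorem abs_inner_le_of_inner_eq_zero (hT : T.IsSymmetric) {s : E} (hs : T s = s)
    (hlam : ∀ μ v, v ≠ 0 → ⟪s, v⟫ = 0 → T v = μ • v → |μ| ≤ lam)
    {x y : E} (hx : ⟪s, x⟫ = 0) (hy : ⟪s, y⟫ = 0) :
    |⟪x, T y⟫| ≤ lam * ‖x‖ * ‖y‖ := by
  let W := (ℝ ∙ s)ᗮ
  have hW : ∀ w ∈ W, T w ∈ W := fun w hw => by
    rw [Submodule.mem_orthogonal_singleton_iff_inner_right] at hw ⊢
    rw [← hT, hs, hw]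
  refine (hT.restrict_invariant hW).abs_inner_le_of_forall_hasEigenvalue (fun μ hμ => ?_)
    ⟨x, Submodule.mem_orthogonal_singleton_iff_inner_right.mpr hx⟩
    ⟨y, Submodule.mem_orthogonal_singleton_iff_inner_right.mpr hy⟩
  obtain ⟨v, hv⟩ := hμ.exists_hasEigenvector
  refine hlam μ v (by simpa using hv.2) ?_ ?_
  · exact Submodule.mem_orthogonal_singleton_iff_inner_right.mp v.2
  · simpa using congrArg Subtype.val (hv.apply_eq_smul)


theorem abs_inner_sub_inner_mul_inner_div_le (hT : T.IsSymmetric) {s : E} (hs : T s = s)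
    (hlam : ∀ μ v, v ≠ 0 → ⟪s, v⟫ = 0 → T v = μ • v → |μ| ≤ lam) (x y : E) :
    |⟪x, T y⟫ - ⟪s, x⟫ * ⟪s, y⟫ / ‖s‖ ^ 2| ≤
      lam * √(‖x‖ ^ 2 - ⟪s, x⟫ ^ 2 / ‖s‖ ^ 2) * √(‖y‖ ^ 2 - ⟪s, y⟫ ^ 2 / ‖s‖ ^ 2) := by
  rcases eq_or_ne s 0 with rfl | hs0
  · simpa [Real.sqrt_sq (norm_nonneg _)] using
      hT.abs_inner_le_of_inner_eq_zero hs hlam (inner_zero_left x) (inner_zero_left y)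
  have hss : ⟪s, s⟫ = ‖s‖ ^ 2 := real_inner_self_eq_norm_sq s
  have hs2 : ‖s‖ ^ 2 ≠ 0 := by positivity
  let w : E → E := fun z => z - (⟪s, z⟫ / ‖s‖ ^ 2) • s
  have hw : ∀ z, ⟪s, w z⟫ = 0 := fun z => by
    simp only [w, inner_sub_right, real_inner_smul_right, hss]
    field_simp
    ring
  have hnorm : ∀ z, ‖w z‖ ^ 2 = ‖z‖ ^ 2 - ⟪s, z⟫ ^ 2 / ‖s‖ ^ 2 := fun z => by
    rw [← real_inner_self_eq_norm_sq, ← real_inner_self_eq_norm_sq z]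
    simp only [w, inner_sub_left, inner_sub_right, real_inner_smul_left, real_inner_smul_right,
      hss, real_inner_comm z s]
    field_simp
    ring
  have hcross : ⟪x, T y⟫ - ⟪s, x⟫ * ⟪s, y⟫ / ‖s‖ ^ 2 = ⟪w x, T (w y)⟫ := by
    have hTs : ∀ z, ⟪s, T z⟫ = ⟪s, z⟫ := fun z => by rw [← hT, hs]
    simp only [w, map_sub, map_smul, hs, inner_sub_left, inner_sub_right, real_inner_smul_left,
      real_inner_smul_right, hTs, hss, real_inner_comm x s]
    field_simp
    ring
  rw [hcross, ← hnorm, ← hnorm, Real.sqrt_sq (norm_nonneg _), Real.sqrt_sq (norm_nonneg _)]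
  exact hT.abs_inner_le_of_inner_eq_zero hs hlam (hw x) (hw y)

end LinearMap.IsSymmetric

theorem Real.sqrt_sub_sq_div_mul_sqrt_sub_sq_div {a a' b b' V : ℝ} (ha : a + a' = V)
    (hb : b + b' = V) (ha0 : 0 ≤ a) (ha0' : 0 ≤ a') :
    √(a - a ^ 2 / V) * √(b - b ^ 2 / V) = √(a * b * a' * b') / V := by
  rcases (show 0 ≤ V by linarith).eq_or_lt with rfl | hV
  · obtain rfl : a = 0 := by linarith
    simp
  have hsub : ∀ c c', c + c' = V → c - c ^ 2 / V = c * c' / V := fun c c' h => by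
    rw [← h] at hV ⊢
    field_simp
    ring
  rw [hsub a a' ha, hsub b b' hb, ← Real.sqrt_mul (by positivity),
    ← Real.sqrt_sq hV.le, ← Real.sqrt_div' _ (by positivity), Real.sqrt_sq hV.le]
  congr 1
  field_simp

namespace SimpleGraph

variable {n : ℕ} (G : SimpleGraph (Fin n)) [DecidableRel G.Adj]

noncomputable def sqrtDegOn (S : Finset (Fin n)) : EuclideanSpace ℝ (Fin n) :=
  WithLp.toLp 2 fun u => if u ∈ S then √(G.degree u) else 0

theorem normAdj_isHermitian : (normAdj G).IsHermitian := by
  ext u v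
  simp only [conjTranspose_apply, normAdj, star_trivial, G.adj_comm v u, mul_comm]

theorem sqrt_degree_pos_of_adj {u v : Fin n} (h : G.Adj u v) : 0 < √(G.degree u : ℝ) :=
  Real.sqrt_pos.mpr (Nat.cast_pos.mpr ((G.degree_pos_iff_exists_adj u).mpr ⟨v, h⟩))

theorem normAdj_mulVec_sqrt_degree :
    normAdj G *ᵥ (fun u => √(G.degree u : ℝ)) = fun u => √(G.degree u : ℝ) := by
  funext u
  have hterm : ∀ v, normAdj G u v * √(G.degree v : ℝ) =
      (if G.Adj u v then 1 else 0) / √(G.degree u : ℝ) := fun v => by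
    by_cases h : G.Adj u v
    · have := (G.sqrt_degree_pos_of_adj h.symm).ne'
      simp only [normAdj, h, if_true]
      field_simp
    · simp [normAdj, h]
  simp only [mulVec, dotProduct, hterm, ← Finset.sum_div, Finset.sum_boole]
  rw [← G.card_neighborFinset_eq_degree, G.neighborFinset_eq_filter, Real.div_sqrt]

theorem inner_sqrtDegOn (S S' : Finset (Fin n)) :
    ⟪G.sqrtDegOn S, G.sqrtDegOn S'⟫ = gvol G (S ∩ S') := by
  have hterm : ∀ u, (if u ∈ S' then √(G.degree u : ℝ) else 0) *
      (if u ∈ S then √(G.degree u : ℝ) else 0) = if u ∈ S ∩ S' then (G.degree u : ℝ) else 0 :=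
    fun u => by
    by_cases hS : u ∈ S <;> by_cases hS' : u ∈ S' <;> simp [hS, hS']
  simp only [sqrtDegOn, PiLp.inner_apply, RCLike.inner_apply, conj_trivial, hterm, gvol,
    Nat.cast_sum, Finset.sum_ite_mem, univ_inter]

theorem sqrt_degree_mul_normAdj_mul_sqrt_degree (u v : Fin n) :
    √(G.degree u : ℝ) * normAdj G u v * √(G.degree v : ℝ) = if G.Adj u v then 1 else 0 := by
  by_cases h : G.Adj u v
  · have hu := (G.sqrt_degree_pos_of_adj h).ne'
    have hv := (G.sqrt_degree_pos_of_adj h.symm).ne'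
    simp only [normAdj, h, if_true]
    field_simp
  · simp [normAdj, h]

theorem inner_sqrtDegOn_normAdj (X Y : Finset (Fin n)) :
    ⟪G.sqrtDegOn X, toEuclideanLin (normAdj G) (G.sqrtDegOn Y)⟫ = gedges G X Y := by
  have hterm : ∀ u v, normAdj G u v * (if v ∈ Y then √(G.degree v : ℝ) else 0) *
      (if u ∈ X then √(G.degree u : ℝ) else 0) =
      if u ∈ X then (if v ∈ Y then (if G.Adj u v then 1 else 0) else 0) else 0 := fun u v => by
    rw [← G.sqrt_degree_mul_normAdj_mul_sqrt_degree u v]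
    by_cases hX : u ∈ X <;> by_cases hY : v ∈ Y <;> simp only [hX, hY, if_true, if_false] <;> ring
  simp only [sqrtDegOn, PiLp.inner_apply, RCLike.inner_apply, conj_trivial, toLpLin_apply,
    mulVec, dotProduct, Finset.sum_mul, hterm]
  simp [Finset.sum_ite_mem, gedges]

theorem gvol_add_gvol_compl (S : Finset (Fin n)) : gvol G S + gvol G Sᶜ = gvol G univ :=
  Finset.sum_add_sum_compl S _

end SimpleGraph

theorem expander_mixing_general_general {n : ℕ} (G : SimpleGraph (Fin n))
    [DecidableRel G.Adj] (lam : ℝ)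
    (heig : ∀ (c : ℝ) (v : Fin n → ℝ), v ≠ 0 →
      (∑ u, v u * Real.sqrt (G.degree u)) = 0 →
      normAdj G *ᵥ v = c • v → |c| ≤ lam)
    (X Y : Finset (Fin n)) :
    |(gedges G X Y : ℝ) -
        (gvol G X : ℝ) * (gvol G Y : ℝ) / (gvol G Finset.univ : ℝ)|
      ≤ lam * Real.sqrt ((gvol G X : ℝ) * (gvol G Y : ℝ) *
          (gvol G Xᶜ : ℝ) * (gvol G Yᶜ : ℝ)) / (gvol G Finset.univ : ℝ) := by
  have hT := isSymmetric_toEuclideanLin_iff.mpr G.normAdj_isHermitian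
  have hs : toEuclideanLin (normAdj G) (G.sqrtDegOn univ) = G.sqrtDegOn univ := by
    simpa [SimpleGraph.sqrtDegOn, toLpLin_apply] using
      congrArg (WithLp.toLp 2) G.normAdj_mulVec_sqrt_degree
  have hlam : ∀ μ v, v ≠ 0 → ⟪G.sqrtDegOn univ, v⟫ = 0 →
      toEuclideanLin (normAdj G) v = μ • v → |μ| ≤ lam := fun μ v hv hsv hTv =>
    heig μ v.ofLp (by simpa using hv)
      (by simpa [SimpleGraph.sqrtDegOn, PiLp.inner_apply] using hsv)
      (by simpa [toLpLin_apply] using congrArg WithLp.ofLp hTv)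
  have hmix := hT.abs_inner_sub_inner_mul_inner_div_le hs hlam (G.sqrtDegOn X) (G.sqrtDegOn Y)
  simp only [← real_inner_self_eq_norm_sq, SimpleGraph.inner_sqrtDegOn,
    SimpleGraph.inner_sqrtDegOn_normAdj, univ_inter, inter_self] at hmix
  have hvol : ∀ S, (gvol G S : ℝ) + gvol G Sᶜ = gvol G univ := fun S =>
    mod_cast G.gvol_add_gvol_compl S
  rwa [mul_assoc, Real.sqrt_sub_sq_div_mul_sqrt_sub_sq_div (hvol X) (hvol Y) (by positivity)
    (by positivity), ← mul_div_assoc] at hmix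

/-- Expander mixing lemma for general (irregular) graphs: if all eigenvalues of
the normalized adjacency matrix other than the top one (whose eigenvector is
`u ↦ √deg(u)`) are at most `λ` in absolute value, then for all vertex sets `X, Y`,
`|e(X,Y) − vol(X)vol(Y)/vol(G)| ≤ λ·√(vol(X)vol(Y)vol(X̄)vol(Ȳ))/vol(G)`. -/
theorem expander_mixing_general {n : ℕ} (G : SimpleGraph (Fin n))
    [DecidableRel G.Adj] (lam : ℝ)
    (hdeg : ∀ u, 0 < G.degree u)
    (heig : ∀ (c : ℝ) (v : Fin n → ℝ), v ≠ 0 →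
      (∑ u, v u * Real.sqrt (G.degree u)) = 0 →
      normAdj G *ᵥ v = c • v → |c| ≤ lam)
    (X Y : Finset (Fin n)) :
    |(gedges G X Y : ℝ) -
        (gvol G X : ℝ) * (gvol G Y : ℝ) / (gvol G Finset.univ : ℝ)|
      ≤ lam * Real.sqrt ((gvol G X : ℝ) * (gvol G Y : ℝ) *
          (gvol G Xᶜ : ℝ) * (gvol G Yᶜ : ℝ)) / (gvol G Finset.univ : ℝ) :=
  expander_mixing_general_general G lam heig X Y
end

section
/- For every x ∈ {0,1}^ℓ let M(x) ∈ ℝ^{n×n} be a symmetric doubly-stochastic matrix with M(x)² = M(x) (an averaging projection), and let M = E_x[M(x)] over uniform x. Suppose there is a constant c ∈ (0,1] and a symmetric doubly-stochastic matrix P with nonnegative eigenvalues whose second-largest eigenvalue is at most 1 − ρ, such that M ≥ c·P entrywise (i.e., M_{uv} ≥ c·P_{uv} for all u,v). Then for every row vector v ∈ ℝⁿ orthogonal to the uniform distribution π, E_x[‖v·M(x)‖₂²] ≤ (1 − cρ)·‖v‖₂². -/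
/-!
Since each `M(x)` is a symmetric projection, `‖v M(x)‖² = v M(x) vᵀ`, so the left-hand side is
the quadratic form of the average `M`. Split `M = (M - cP) + cP`: the first part is a nonnegative
matrix with row and column sums `1 - c`, whose quadratic form is at most `(1 - c)‖v‖²` by
`2 aᵢⱼ vᵢ vⱼ ≤ aᵢⱼ (vᵢ² + vⱼ²)`. The second part preserves `π^⊥` (the columns of `P` sum to `1`),
on which it is symmetric with eigenvalues at most `1 - ρ`, so its quadratic form is at most
`c (1 - ρ)‖v‖²`.
-/

open Matrix Finset

/-- Squared Euclidean norm of a finitely indexed real vector. -/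
def eucNormSq {α : Type*} [Fintype α] (v : α → ℝ) : ℝ :=
  ∑ i, (v i) ^ 2

open scoped InnerProductSpace

namespace LinearMap.IsSymmetric

variable {E : Type*} [NormedAddCommGroup E] [InnerProductSpace ℝ E] [FiniteDimensional ℝ E]
  {T : E →ₗ[ℝ] E}

theorem inner_map_self_le_of_forall_hasEigenvalue_le (hT : T.IsSymmetric) {b : ℝ}
    (hb : ∀ μ, Module.End.HasEigenvalue T μ → μ ≤ b) (x : E) :
    ⟪T x, x⟫_ℝ ≤ b * ‖x‖ ^ 2 := by
  set e := hT.eigenvectorBasis rfl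
  have hnorm : ‖x‖ ^ 2 = ∑ i, e.repr x i ^ 2 := by
    rw [← e.repr.norm_map, EuclideanSpace.real_norm_sq_eq]
  have hquad : ⟪T x, x⟫_ℝ = ∑ i, hT.eigenvalues rfl i * e.repr x i ^ 2 := by
    rw [← e.repr.inner_map_map, PiLp.inner_apply]
    simp [e, hT.eigenvectorBasis_apply_self_apply, sq, mul_left_comm]
  rw [hnorm, hquad, Finset.mul_sum]
  exact sum_le_sum fun i _ ↦
    mul_le_mul_of_nonneg_right (hb _ (hT.hasEigenvalue_eigenvalues rfl i)) (sq_nonneg _)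

theorem inner_map_self_le_of_invariant (hT : T.IsSymmetric) {V : Submodule ℝ E}
    (hV : ∀ v ∈ V, T v ∈ V) {b : ℝ}
    (hb : ∀ (μ : ℝ) (v : E), v ∈ V → v ≠ 0 → T v = μ • v → μ ≤ b) {x : E} (hx : x ∈ V) :
    ⟪T x, x⟫_ℝ ≤ b * ‖x‖ ^ 2 := by
  refine (hT.restrict_invariant hV).inner_map_self_le_of_forall_hasEigenvalue_le
    (fun μ hμ ↦ ?_) ⟨x, hx⟩
  obtain ⟨w, hw⟩ := hμ.exists_hasEigenvector
  exact hb μ w w.2 (by simpa using hw.2)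
    (congrArg Subtype.val (Module.End.mem_eigenspace_iff.mp hw.1))

end LinearMap.IsSymmetric

lemma eucNormSq_eq_dotProduct {α : Type*} [Fintype α] (v : α → ℝ) : eucNormSq v = v ⬝ᵥ v := by
  simp [eucNormSq, dotProduct, sq]

namespace Matrix

variable {n : Type*} [Fintype n]

lemma sum_mulVec_of_sum_col_eq {R : Type*} [CommSemiring R] {A : Matrix n n R} {s : R}
    (hcol : ∀ j, ∑ i, A i j = s) (v : n → R) : ∑ i, (A *ᵥ v) i = s * ∑ i, v i := by
  simp only [mulVec, dotProduct]
  rw [sum_comm, mul_sum]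
  simp [← sum_mul, hcol]

lemma vecMul_dotProduct_vecMul_of_isSymm_of_mul_self {R : Type*} [CommSemiring R]
    {M : Matrix n n R} (hM : M.IsSymm) (hMM : M * M = M) (v : n → R) :
    (v ᵥ* M) ⬝ᵥ (v ᵥ* M) = v ⬝ᵥ (M *ᵥ v) := by
  have hvM : v ᵥ* M = M *ᵥ v := by rw [← mulVec_transpose, hM.eq]
  rw [← dotProduct_mulVec, hvM, mulVec_mulVec, hMM]

lemma dotProduct_mulVec_le_of_nonneg {A : Matrix n n ℝ} {s : ℝ} (hA : ∀ i j, 0 ≤ A i j)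
    (hrow : ∀ i, ∑ j, A i j ≤ s) (hcol : ∀ j, ∑ i, A i j ≤ s) (v : n → ℝ) :
    v ⬝ᵥ (A *ᵥ v) ≤ s * eucNormSq v := by
  have h2 : 2 * (v ⬝ᵥ (A *ᵥ v)) ≤ ∑ i, ∑ j, A i j * (v i ^ 2 + v j ^ 2) := by
    simp only [dotProduct, mulVec, mul_sum]
    refine sum_le_sum fun i _ ↦ sum_le_sum fun j _ ↦ ?_
    nlinarith [mul_nonneg (hA i j) (sq_nonneg (v i - v j))]
  have hsplit : ∑ i, ∑ j, A i j * (v i ^ 2 + v j ^ 2)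
      = ∑ i, (∑ j, A i j) * v i ^ 2 + ∑ j, (∑ i, A i j) * v j ^ 2 := by
    simp only [mul_add, sum_add_distrib, sum_mul]
    rw [sum_comm (f := fun i j ↦ A i j * v j ^ 2)]
  have hrow' : ∑ i, (∑ j, A i j) * v i ^ 2 ≤ s * eucNormSq v := by
    rw [eucNormSq, mul_sum]
    exact sum_le_sum fun i _ ↦ mul_le_mul_of_nonneg_right (hrow i) (sq_nonneg _)
  have hcol' : ∑ j, (∑ i, A i j) * v j ^ 2 ≤ s * eucNormSq v := by
    rw [eucNormSq, mul_sum]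
    exact sum_le_sum fun j _ ↦ mul_le_mul_of_nonneg_right (hcol j) (sq_nonneg _)
  linarith

lemma dotProduct_mulVec_le_of_sum_eq_zero {P : Matrix n n ℝ} (hP : P.IsSymm) {s : ℝ}
    (hcol : ∀ j, ∑ i, P i j = s) {β : ℝ}
    (hgap : ∀ (b : ℝ) (u : n → ℝ), u ≠ 0 → ∑ i, u i = 0 → P *ᵥ u = b • u → b ≤ β)
    {v : n → ℝ} (hv : ∑ i, v i = 0) :
    v ⬝ᵥ (P *ᵥ v) ≤ β * eucNormSq v := by
  classical
  set V := (ℝ ∙ WithLp.toLp 2 (1 : n → ℝ))ᗮ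
  have mem_V : ∀ u : EuclideanSpace ℝ n, u ∈ V ↔ ∑ i, u i = 0 := fun u ↦ by
    simp [V, Submodule.mem_orthogonal_singleton_iff_inner_right,
      EuclideanSpace.inner_eq_star_dotProduct, dotProduct]
  have hT : (toEuclideanLin P).IsSymmetric :=
    isSymmetric_toEuclideanLin_iff.mpr (by simpa using hP)
  have := hT.inner_map_self_le_of_invariant (V := V) (b := β) ?_ ?_
    ((mem_V (WithLp.toLp 2 v)).mpr hv)
  · simpa [EuclideanSpace.inner_eq_star_dotProduct, EuclideanSpace.real_norm_sq_eq, eucNormSq,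
      dotProduct_comm] using this
  · intro u hu
    rw [mem_V] at hu ⊢
    simpa [hu] using sum_mulVec_of_sum_col_eq hcol u
  · intro μ u hu hu0 hTu
    refine hgap μ u.ofLp (by simpa using hu0) ((mem_V u).mp hu) ?_
    simpa using congrArg WithLp.ofLp hTu

lemma dotProduct_mulVec_le_of_smul_le {N P : Matrix n n ℝ} {c ρ : ℝ} (hc : 0 ≤ c)
    (hdom : ∀ i j, c * P i j ≤ N i j)
    (hNrow : ∀ i, ∑ j, N i j = 1) (hNcol : ∀ j, ∑ i, N i j = 1) (hP : P.IsSymm)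
    (hProw : ∀ i, ∑ j, P i j = 1) (hPcol : ∀ j, ∑ i, P i j = 1)
    (hgap : ∀ (b : ℝ) (u : n → ℝ), u ≠ 0 → ∑ i, u i = 0 → P *ᵥ u = b • u → b ≤ 1 - ρ)
    {v : n → ℝ} (hv : ∑ i, v i = 0) :
    v ⬝ᵥ (N *ᵥ v) ≤ (1 - c * ρ) * eucNormSq v := by
  have hdiff : v ⬝ᵥ ((N - c • P) *ᵥ v) ≤ (1 - c) * eucNormSq v := by
    refine dotProduct_mulVec_le_of_nonneg (fun i j ↦ ?_) (fun i ↦ ?_) (fun j ↦ ?_) v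
    · simpa using hdom i j
    · simp [sum_sub_distrib, ← mul_sum, hNrow, hProw]
    · simp [sum_sub_distrib, ← mul_sum, hNcol, hPcol]
  have hPv := dotProduct_mulVec_le_of_sum_eq_zero hP hPcol hgap hv
  calc v ⬝ᵥ (N *ᵥ v) = v ⬝ᵥ ((N - c • P) *ᵥ v) + c * (v ⬝ᵥ (P *ᵥ v)) := by
        simp [sub_mulVec, smul_mulVec]
    _ ≤ (1 - c) * eucNormSq v + c * ((1 - ρ) * eucNormSq v) := by gcongr
    _ = (1 - c * ρ) * eucNormSq v := by ring

end Matrix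

theorem averaged_projection_contraction_general {ℓ n : ℕ}
    (Mx : (Fin ℓ → Bool) → Matrix (Fin n) (Fin n) ℝ)
    (hsym : ∀ x, (Mx x).IsSymm)
    (hrow : ∀ x i, ∑ j, Mx x i j = 1) (hcol : ∀ x j, ∑ i, Mx x i j = 1)
    (hproj : ∀ x, Mx x * Mx x = Mx x)
    (c ρ : ℝ) (hc0 : 0 < c)
    (P : Matrix (Fin n) (Fin n) ℝ)
    (hPsym : P.IsSymm)
    (hProw : ∀ i, ∑ j, P i j = 1) (hPcol : ∀ j, ∑ i, P i j = 1)
    (hPeigGap : ∀ (b : ℝ) (v : Fin n → ℝ), v ≠ 0 → (∑ i, v i) = 0 →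
      P *ᵥ v = b • v → b ≤ 1 - ρ)
    (hdom : ∀ i j, c * P i j ≤ ((2 : ℝ) ^ ℓ)⁻¹ * ∑ x, Mx x i j) :
    ∀ v : Fin n → ℝ, (∑ i, v i) = 0 →
      ((2 : ℝ) ^ ℓ)⁻¹ * ∑ x, eucNormSq (v ᵥ* Mx x)
        ≤ (1 - c * ρ) * eucNormSq v := by
  intro v hv
  set N := ((2 : ℝ) ^ ℓ)⁻¹ • ∑ x, Mx x
  have hN : ∀ i j, N i j = ((2 : ℝ) ^ ℓ)⁻¹ * ∑ x, Mx x i j := by simp [N, Matrix.sum_apply]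
  have hNrow : ∀ i, ∑ j, N i j = 1 := fun i ↦ by
    simp only [hN, ← mul_sum]
    rw [sum_comm]
    simp [hrow]
  have hNcol : ∀ j, ∑ i, N i j = 1 := fun j ↦ by
    simp only [hN, ← mul_sum]
    rw [sum_comm]
    simp [hcol]
  calc ((2 : ℝ) ^ ℓ)⁻¹ * ∑ x, eucNormSq (v ᵥ* Mx x) = v ⬝ᵥ (N *ᵥ v) := by
        simp [N, eucNormSq_eq_dotProduct, vecMul_dotProduct_vecMul_of_isSymm_of_mul_self (hsym _)
          (hproj _), smul_mulVec, sum_mulVec, dotProduct_sum]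
    _ ≤ (1 - c * ρ) * eucNormSq v :=
        dotProduct_mulVec_le_of_smul_le hc0.le (by simpa [hN] using hdom) hNrow hNcol hPsym
          hProw hPcol hPeigGap hv

/-- Contraction of an averaged family of symmetric doubly-stochastic projections:
if each `M(x)` is a symmetric doubly-stochastic idempotent, the average
`M = E_x[M(x)]` dominates `c·P` entrywise for a symmetric doubly-stochastic `P`
with nonnegative eigenvalues and second-largest eigenvalue at most `1 − ρ`, then
`E_x[‖v·M(x)‖₂²] ≤ (1 − cρ)·‖v‖₂²` for every row vector `v` orthogonal to the
uniform distribution. -/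
theorem averaged_projection_contraction {ℓ n : ℕ}
    (Mx : (Fin ℓ → Bool) → Matrix (Fin n) (Fin n) ℝ)
    (hsym : ∀ x, (Mx x).IsSymm)
    (hnn : ∀ x i j, 0 ≤ Mx x i j)
    (hrow : ∀ x i, ∑ j, Mx x i j = 1) (hcol : ∀ x j, ∑ i, Mx x i j = 1)
    (hproj : ∀ x, Mx x * Mx x = Mx x)
    (c ρ : ℝ) (hc0 : 0 < c) (hc1 : c ≤ 1) (hρ : 0 < ρ)
    (P : Matrix (Fin n) (Fin n) ℝ)
    (hPsym : P.IsSymm) (hPnn : ∀ i j, 0 ≤ P i j)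
    (hProw : ∀ i, ∑ j, P i j = 1) (hPcol : ∀ j, ∑ i, P i j = 1)
    (hPeigNonneg : ∀ (b : ℝ) (v : Fin n → ℝ), v ≠ 0 → P *ᵥ v = b • v → 0 ≤ b)
    (hPeigGap : ∀ (b : ℝ) (v : Fin n → ℝ), v ≠ 0 → (∑ i, v i) = 0 →
      P *ᵥ v = b • v → b ≤ 1 - ρ)
    (hdom : ∀ i j, c * P i j ≤ ((2 : ℝ) ^ ℓ)⁻¹ * ∑ x, Mx x i j) :
    ∀ v : Fin n → ℝ, (∑ i, v i) = 0 →
      ((2 : ℝ) ^ ℓ)⁻¹ * ∑ x, eucNormSq (v ᵥ* Mx x)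
        ≤ (1 - c * ρ) * eucNormSq v :=
  averaged_projection_contraction_general Mx hsym hrow hcol hproj c ρ hc0 P hPsym hProw hPcol
    hPeigGap hdom
end
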